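/- arXiv:1601.00723 — 2 statements merged into one kernel-verified Lean document; each statement's English description precedes it below -/
import Mathlib

section
/- The trace of the matrix U = B·A⁻¹·B·A·B⁻¹·A satisfies M⁴·tr(U) = Q(t,M) = −M⁴t³ + (−2M⁶ + 2M⁴ − 2M²)t² + (−M⁸ + 2M⁶ − 3M⁴ + 2M² − 1)t + 2M⁴. (This identifies the coefficient Q appearing in the Riley–Mednykh recursion as M⁴ times the trace of the image of the word t s⁻¹ t s t⁻¹ s.) -/
open Matrix

/-- The meridian generator image `ρ(s)`. -/
noncomputable def rhoS (M : ℂ) : Matrix (Fin 2) (Fin 2) ℂ :=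
  !![M, 1; 0, M⁻¹]

/-- The meridian generator image `ρ(t)`. -/
noncomputable def rhoT (M t : ℂ) : Matrix (Fin 2) (Fin 2) ℂ :=
  !![M, 0; 2 - M ^ 2 - (M ^ 2)⁻¹ - t, M⁻¹]

lemma rhoS_inv (M : ℂ) (hM : M ≠ 0) : (rhoS M)⁻¹ = !![M⁻¹, -1; 0, M] := by
  apply inv_eq_left_inv
  ext i j
  fin_cases i <;> fin_cases j <;>
    simp [rhoS, Matrix.mul_apply, Fin.sum_univ_two] <;> field_simp

lemma rhoT_inv (M t : ℂ) (hM : M ≠ 0) :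
    (rhoT M t)⁻¹ = !![M⁻¹, 0; -(2 - M ^ 2 - (M ^ 2)⁻¹ - t), M] := by
  apply inv_eq_left_inv
  ext i j
  fin_cases i <;> fin_cases j <;>
    simp [rhoT, Matrix.mul_apply, Fin.sum_univ_two] <;> field_simp <;> ring

/-- `U = ρ(t s⁻¹ t s t⁻¹ s)`. -/
noncomputable def wordU (M t : ℂ) : Matrix (Fin 2) (Fin 2) ℂ :=
  rhoT M t * (rhoS M)⁻¹ * rhoT M t * rhoS M * (rhoT M t)⁻¹ * rhoS M

set_option maxHeartbeats 2000000 in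
/-- `M⁴·tr(U) = Q(t,M)`. -/
theorem trace_wordU (M t : ℂ) (hM : M ≠ 0) :
    M ^ 4 * (wordU M t).trace =
      -M ^ 4 * t ^ 3 + (-2 * M ^ 6 + 2 * M ^ 4 - 2 * M ^ 2) * t ^ 2
        + (-M ^ 8 + 2 * M ^ 6 - 3 * M ^ 4 + 2 * M ^ 2 - 1) * t + 2 * M ^ 4 := by
  rw [wordU, rhoS_inv M hM, rhoT_inv M t hM]
  set N := M⁻¹ with hN
  have h1 : M * N = 1 := mul_inv_cancel₀ hM
  simp only [rhoS, rhoT, Matrix.mul_fin_two, Matrix.trace_fin_two_of, ← inv_pow, hN]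
  linear_combination ((-1) * t + (-1) * M * N * t + 2 * M ^ 2 * t + (-2) * M ^ 2 * t ^ 2
    + (-1) * M ^ 2 * N ^ 2 * t + 2 * M ^ 3 * N * t + (-2) * M ^ 3 * N * t ^ 2
    + (-1) * M ^ 3 * N ^ 3 * t + (-6) * M ^ 4 + 9 * M ^ 4 * t + (-4) * M ^ 4 * t ^ 2
    + 8 * M ^ 4 * N ^ 2 + (-6) * M ^ 4 * N ^ 2 * t + (-2) * M ^ 4 * N ^ 4
    + 10 * M ^ 5 * N + (-7) * M ^ 5 * N * t + (-4) * M ^ 5 * N ^ 3 + 8 * M ^ 6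
    + (-6) * M ^ 6 * t + (-4) * M ^ 6 * N ^ 2 + (-4) * M ^ 7 * N + (-2) * M ^ 8) * h1
end

section
/- The matrix U = B·A⁻¹·B·A·B⁻¹·A satisfies the Cayley–Hamilton-type identity M⁴·U² = Q(t,M)·U − M⁴·I, where I is the 2×2 identity matrix. (Since det U = 1, this identity is the source of the linear recursion P_{2n} = Q·P_{2(n−1)} − M⁸·P_{2(n−2)} satisfied by the Riley–Mednykh polynomials after rescaling by M^{4n}.) -/
open Matrix

/-- The coefficient `Q(t,M)` of the Riley–Mednykh recursion. -/
noncomputable def coeffQ (M t : ℂ) : ℂ :=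
  -M ^ 4 * t ^ 3 + (-2 * M ^ 6 + 2 * M ^ 4 - 2 * M ^ 2) * t ^ 2
    + (-M ^ 8 + 2 * M ^ 6 - 3 * M ^ 4 + 2 * M ^ 2 - 1) * t + 2 * M ^ 4

/-- The rescaled word `W = M⁴ • U`, with polynomial entries. -/
noncomputable def wordW (M t : ℂ) : Matrix (Fin 2) (Fin 2) ℂ :=
  !![M^4*t + 2*M^6 - 2*M^6*t + M^6*t^2 - 2*M^8 + 2*M^8*t + M^10,
     M^3*t + M^5 - M^5*t + M^5*t^2 - M^7 + 2*M^7*t + M^9;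
     -M*t - M^3 + 3*M^3*t - 2*M^3*t^2 + 3*M^5 - 6*M^5*t + 3*M^5*t^2 - M^5*t^3
       - 4*M^7 + 6*M^7*t - 3*M^7*t^2 + 3*M^9 - 3*M^9*t - M^11,
     -t + 2*M^2*t - 2*M^2*t^2 + 2*M^4 - 4*M^4*t + 2*M^4*t^2 - M^4*t^3
       - 2*M^6 + 4*M^6*t - 3*M^6*t^2 + 2*M^8 - 3*M^8*t - M^10]

set_option maxHeartbeats 1000000 in
lemma wordU_smul (M t : ℂ) (hM : M ≠ 0) : M ^ 4 • wordU M t = wordW M t := by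
  have hMN : M * M⁻¹ = 1 := mul_inv_cancel₀ hM
  unfold wordU wordW
  rw [rhoS_inv M hM, rhoT_inv M t hM]
  unfold rhoS rhoT
  ext i j
  fin_cases i <;> fin_cases j
  · simp [Matrix.smul_apply, Matrix.mul_apply, Fin.sum_univ_two]
    linear_combination ((1:ℂ)*M^4*t^1 + (1:ℂ)*M^5*M⁻¹^1*t^1 + (-2:ℂ)*M^6 + (2:ℂ)*M^6*t^1
      + (2:ℂ)*M^6*M⁻¹^2 + (2:ℂ)*M^7*M⁻¹^1 + (2:ℂ)*M^8 + (2:ℂ)*M^6 + (-1:ℂ)*M^6*t^1 + (-1:ℂ)*M^6*M⁻¹^2 + (-1:ℂ)*M^7*M⁻¹^1 + (-1:ℂ)*M^8) * hMN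
  · simp [Matrix.smul_apply, Matrix.mul_apply, Fin.sum_univ_two]
    linear_combination ((1:ℂ)*M^3*t^1 + (1:ℂ)*M^4*M⁻¹^1*t^1 + (-3:ℂ)*M^5 + (3:ℂ)*M^5*t^1
      + (2:ℂ)*M^5*M⁻¹^2 + (3:ℂ)*M^6*M⁻¹^1 + (3:ℂ)*M^7 + (2:ℂ)*M^5 + (-1:ℂ)*M^5*t^1 + (-1:ℂ)*M^5*M⁻¹^2 + (-2:ℂ)*M^6*M⁻¹^1 + (-1:ℂ)*M^7) * hMN
  · simp [Matrix.smul_apply, Matrix.mul_apply, Fin.sum_univ_two]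
    linear_combination ((-1:ℂ)*M^1*t^1 + (-1:ℂ)*M^2*M⁻¹^1*t^1 + (-1:ℂ)*M^3 + (3:ℂ)*M^3*t^1
      + (-2:ℂ)*M^3*t^2 + (-1:ℂ)*M^3*M⁻¹^2*t^1 + (-1:ℂ)*M^4*M⁻¹^1 + (3:ℂ)*M^4*M⁻¹^1*t^1
      + (-2:ℂ)*M^4*M⁻¹^1*t^2 + (-1:ℂ)*M^4*M⁻¹^3*t^1 + (-5:ℂ)*M^5 + (6:ℂ)*M^5*t^1
      + (-3:ℂ)*M^5*t^2 + (7:ℂ)*M^5*M⁻¹^2 + (-5:ℂ)*M^5*M⁻¹^2*t^1 + (-2:ℂ)*M^5*M⁻¹^4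
      + (7:ℂ)*M^6*M⁻¹^1 + (-6:ℂ)*M^6*M⁻¹^1*t^1 + (-3:ℂ)*M^6*M⁻¹^3 + (8:ℂ)*M^7
      + (-6:ℂ)*M^7*t^1 + (-5:ℂ)*M^7*M⁻¹^2 + (-4:ℂ)*M^8*M⁻¹^1 + (-3:ℂ)*M^9) * hMN
  · simp [Matrix.smul_apply, Matrix.mul_apply, Fin.sum_univ_two]
    linear_combination ((-1:ℂ)*t^1 + (-1:ℂ)*M^1*M⁻¹^1*t^1 + (2:ℂ)*M^2*t^1 + (-2:ℂ)*M^2*t^2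
      + (-1:ℂ)*M^2*M⁻¹^2*t^1 + (2:ℂ)*M^3*M⁻¹^1*t^1 + (-2:ℂ)*M^3*M⁻¹^1*t^2
      + (-1:ℂ)*M^3*M⁻¹^3*t^1 + (-6:ℂ)*M^4 + (8:ℂ)*M^4*t^1 + (-4:ℂ)*M^4*t^2
      + (8:ℂ)*M^4*M⁻¹^2 + (-6:ℂ)*M^4*M⁻¹^2*t^1 + (-2:ℂ)*M^4*M⁻¹^4 + (10:ℂ)*M^5*M⁻¹^1
      + (-8:ℂ)*M^5*M⁻¹^1*t^1 + (-4:ℂ)*M^5*M⁻¹^3 + (10:ℂ)*M^6 + (-8:ℂ)*M^6*t^1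
      + (-6:ℂ)*M^6*M⁻¹^2 + (-6:ℂ)*M^7*M⁻¹^1 + (-4:ℂ)*M^8) * hMN

set_option maxHeartbeats 1000000 in
lemma wordW_sq (M t : ℂ) :
    wordW M t * wordW M t = coeffQ M t • wordW M t - M ^ 8 • 1 := by
  unfold wordW coeffQ
  ext i j
  fin_cases i <;> fin_cases j <;>
    · simp [Matrix.mul_apply, Fin.sum_univ_two, Matrix.one_apply]
      ring

/-- The Cayley–Hamilton-type identity `M⁴·U² = Q(t,M)·U − M⁴·I`. -/
theorem cayley_hamilton_wordU (M t : ℂ) (hM : M ≠ 0) :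
    M ^ 4 • (wordU M t ^ 2) =
      coeffQ M t • wordU M t - M ^ 4 • (1 : Matrix (Fin 2) (Fin 2) ℂ) := by
  have h8 : (M ^ 8 : ℂ) ≠ 0 := pow_ne_zero _ hM
  have hW := wordU_smul M t hM
  have key := wordW_sq M t
  apply smul_right_injective (Matrix (Fin 2) (Fin 2) ℂ) h8
  show (M ^ 8 : ℂ) • (M ^ 4 • wordU M t ^ 2)
      = (M ^ 8 : ℂ) • (coeffQ M t • wordU M t - M ^ 4 • 1)
  have e1 : (M ^ 8 : ℂ) • (M ^ 4 • wordU M t ^ 2)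
      = M ^ 4 • ((M ^ 4 • wordU M t) * (M ^ 4 • wordU M t)) := by
    rw [smul_mul_smul_comm, ← pow_add, pow_two, smul_smul, smul_smul]
    ring_nf
  rw [e1, hW, key, ← hW]
  rw [smul_sub, smul_sub, smul_smul, smul_smul, smul_smul, smul_smul, smul_smul]
  congr 1
  · congr 1
    ring
  · congr 1
    ring
end
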